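/- arXiv:1610.04266 — 3 statements merged into one kernel-verified Lean document; each statement's English description precedes it below -/
import Mathlib

section
/- For every integer s and all integers r, q with −12r + 2q ≤ 6r, the set of (x₁, x₂, x₃) ∈ ℕ³ satisfying −12r + 2q ≤ 16x₁x₂ + 48x₁x₃ + 24x₂² + 48x₂x₃ + 8x₃² − 72x₁ − 128x₂ − 112x₃ ≤ 6r is finite. -/
/-- For all integers `r, q` with `-12r + 2q ≤ 6r`, only finitely many
`(x₁,x₂,x₃) ∈ ℕ³` satisfy `-12r + 2q ≤ Q(x₁,x₂,x₃) ≤ 6r` for the associated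
function `Q` of the Calabi–Yau fourfold #130. -/
theorem stmt_12 (r q : ℤ) (h : -12 * r + 2 * q ≤ 6 * r) :
    {v : ℕ × ℕ × ℕ |
      -12 * r + 2 * q
          ≤ 16 * (v.1 : ℤ) * v.2.1 + 48 * v.1 * v.2.2 + 24 * (v.2.1 : ℤ) ^ 2
            + 48 * v.2.1 * v.2.2 + 8 * (v.2.2 : ℤ) ^ 2
            - 72 * v.1 - 128 * v.2.1 - 112 * v.2.2 ∧
      16 * (v.1 : ℤ) * v.2.1 + 48 * v.1 * v.2.2 + 24 * (v.2.1 : ℤ) ^ 2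
          + 48 * v.2.1 * v.2.2 + 8 * (v.2.2 : ℤ) ^ 2
          - 72 * v.1 - 128 * v.2.1 - 112 * v.2.2 ≤ 6 * r}.Finite := by
  set N : ℤ := |6 * r| + |12 * r - 2 * q| + 1000 with hN
  have habs1 : (0 : ℤ) ≤ |6 * r| := abs_nonneg _
  have habs2 : (0 : ℤ) ≤ |12 * r - 2 * q| := abs_nonneg _
  have hN0 : (1000 : ℤ) ≤ N := by rw [hN]; linarith
  apply (Set.finite_Iic ((N.toNat, N.toNat, N.toNat) : ℕ × ℕ × ℕ)).subset
  rintro ⟨a, b, c⟩ ⟨hL, hU⟩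
  simp only at hL hU
  have ha : (0 : ℤ) ≤ (a : ℤ) := Int.natCast_nonneg a
  have hb : (0 : ℤ) ≤ (b : ℤ) := Int.natCast_nonneg b
  have hc : (0 : ℤ) ≤ (c : ℤ) := Int.natCast_nonneg c
  have hU' : 6 * r ≤ |6 * r| := le_abs_self _
  have hL' : -|12 * r - 2 * q| ≤ -12 * r + 2 * q := by
    have := le_abs_self (12 * r - 2 * q); linarith
  have key : (a : ℤ) ≤ N ∧ (b : ℤ) ≤ N ∧ (c : ℤ) ≤ N := by
    rcases le_or_gt ((b : ℤ) + 3 * c) 4 with hcase | hcase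
    · -- coefficient 16b+48c-72 ≤ -8, and b ≤ 4, c ≤ 1
      have hb4 : (b : ℤ) ≤ 4 := by linarith
      have hc1 : (c : ℤ) ≤ 1 := by linarith
      refine ⟨?_, by linarith, by linarith⟩
      nlinarith [mul_nonneg ha (by linarith : (0:ℤ) ≤ 4 - ((b:ℤ) + 3 * c)),
        mul_nonneg hb (by linarith : (0:ℤ) ≤ 4 - (b:ℤ)),
        mul_nonneg hc (by linarith : (0:ℤ) ≤ 1 - (c:ℤ)),
        mul_nonneg hb (by linarith : (0:ℤ) ≤ 1 - (c:ℤ))]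
    · -- coefficient ≥ 8
      have hcoef : (8 : ℤ) ≤ 16 * b + 48 * c - 72 := by omega
      have hcross : (0 : ℤ) ≤ 48 * b * c := by positivity
      constructor
      · nlinarith [mul_le_mul_of_nonneg_right hcoef ha, sq_nonneg (3*(b:ℤ) - 8),
          sq_nonneg ((c:ℤ) - 7)]
      constructor
      · by_contra hb'
        push_neg at hb'
        nlinarith [mul_nonneg (by linarith : (0:ℤ) ≤ 16 * b + 48 * c - 72) ha,
          sq_nonneg ((c:ℤ) - 7), mul_pos (by linarith : (0:ℤ) < (b:ℤ)) (by linarith : (0:ℤ) < (b:ℤ) - 100)]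
      · by_contra hc'
        push_neg at hc'
        nlinarith [mul_nonneg (by linarith : (0:ℤ) ≤ 16 * b + 48 * c - 72) ha,
          sq_nonneg (3*(b:ℤ) - 8), mul_pos (by linarith : (0:ℤ) < (c:ℤ)) (by linarith : (0:ℤ) < (c:ℤ) - 100)]
  obtain ⟨h1, h2, h3⟩ := key
  refine ⟨?_, ?_, ?_⟩ <;> simp only [Prod.mk_le_mk] <;> omega
end

section
/- Let Q(x₁,x₂,x₃) = 32x₁x₂ + 64x₁x₃ + 32x₂² + 32x₂x₃ − 96x₁ − 128x₂ − 96x₃. There are exactly 4 triples (x₁, x₂, x₃) ∈ ℕ³ with Q(x₁, x₂, x₃) = −64. -/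
/-- There are exactly 4 triples in `ℕ³` where the associated function of the
Calabi–Yau fourfold #133 takes the value `-64`. -/
theorem stmt_14 :
    {v : ℕ × ℕ × ℕ |
      32 * (v.1 : ℤ) * v.2.1 + 64 * v.1 * v.2.2 + 32 * (v.2.1 : ℤ) ^ 2
        + 32 * v.2.1 * v.2.2 - 96 * v.1 - 128 * v.2.1 - 96 * v.2.2
        = -64}.ncard = 4 := by
  have hset : {v : ℕ × ℕ × ℕ |
      32 * (v.1 : ℤ) * v.2.1 + 64 * v.1 * v.2.2 + 32 * (v.2.1 : ℤ) ^ 2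
        + 32 * v.2.1 * v.2.2 - 96 * v.1 - 128 * v.2.1 - 96 * v.2.2
        = -64} = (↑({(2,0,4),(4,0,2),(1,2,3),(3,2,1)} : Finset (ℕ × ℕ × ℕ))) := by
    ext ⟨a,b,c⟩
    simp only [Set.mem_setOf_eq, Finset.coe_insert, Set.mem_insert_iff,
      Finset.coe_singleton, Set.mem_singleton_iff, Prod.mk.injEq]
    constructor
    · intro h
      have key16 : (16:ℤ)*(((2*a+b:ℤ)-3)*((2*c+b:ℤ)-3)) = 16*(-(b:ℤ)^2+2*(b:ℤ)+5) := by
        linear_combination h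
      have key : ((2*a+b:ℤ)-3)*((2*c+b:ℤ)-3) = -(b:ℤ)^2+2*(b:ℤ)+5 :=
        mul_left_cancel₀ (by norm_num) key16
      have hb : b ≤ 3 := by
        by_contra hb
        push_neg at hb
        have h1 : (1:ℤ) ≤ (2*a+b:ℤ)-3 := by
          have : (4:ℤ) ≤ b := by exact_mod_cast hb
          linarith [Int.ofNat_nonneg a]
        have h2 : (1:ℤ) ≤ (2*c+b:ℤ)-3 := by
          have : (4:ℤ) ≤ b := by exact_mod_cast hb
          linarith [Int.ofNat_nonneg c]
        have : (4:ℤ) ≤ b := by exact_mod_cast hb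
        nlinarith [key]
      have ha : a ≤ 4 := by
        by_contra ha
        push_neg at ha
        have ha' : (5:ℤ) ≤ a := by exact_mod_cast ha
        have hb' : (b:ℤ) ≤ 3 := by exact_mod_cast hb
        have hb0 : (0:ℤ) ≤ b := Int.ofNat_nonneg b
        have hc0 : (0:ℤ) ≤ c := Int.ofNat_nonneg c
        rcases le_or_gt ((2*c+b:ℤ)-3) 0 with h3 | h3
        · nlinarith [key]
        · nlinarith [key]
      have hc : c ≤ 4 := by
        by_contra hc
        push_neg at hc
        have hc' : (5:ℤ) ≤ c := by exact_mod_cast hc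
        have hb' : (b:ℤ) ≤ 3 := by exact_mod_cast hb
        have hb0 : (0:ℤ) ≤ b := Int.ofNat_nonneg b
        have ha0 : (0:ℤ) ≤ a := Int.ofNat_nonneg a
        rcases le_or_gt ((2*a+b:ℤ)-3) 0 with h3 | h3
        · nlinarith [key]
        · nlinarith [key]
      interval_cases a <;> interval_cases b <;> interval_cases c <;> omega
    · rintro (⟨rfl,rfl,rfl⟩|⟨rfl,rfl,rfl⟩|⟨rfl,rfl,rfl⟩|⟨rfl,rfl,rfl⟩) <;> norm_num
  rw [hset, Set.ncard_coe_finset]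
  decide
end

section
/- For each integer p > −96, the equation 32x₁x₂ + 64x₁x₃ + 32x₂² + 32x₂x₃ − 96x₁ − 128x₂ − 96x₃ = p has only finitely many solutions (x₁, x₂, x₃) ∈ ℕ³. -/
lemma aux_bound_16 (p a b c : ℤ) (hp : p > -96) (ha : 0 ≤ a) (hb : 0 ≤ b) (hc : 0 ≤ c)
    (heq : 32 * a * b + 64 * a * c + 32 * b ^ 2 + 32 * b * c - 96 * a - 128 * b - 96 * c = p) :
    a ≤ |p| + 16 * (4 + |p|) ^ 2 + 32 * (4 + |p|) + 147 ∧
    b ≤ |p| + 16 * (4 + |p|) ^ 2 + 32 * (4 + |p|) + 147 ∧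
    c ≤ |p| + 16 * (4 + |p|) ^ 2 + 32 * (4 + |p|) + 147 := by
  have hpa : p ≤ |p| := le_abs_self p
  have hpn : 0 ≤ |p| := abs_nonneg p
  have h16 : 16 * ((2 * a + b - 3) * (2 * c + b - 3)) = p - 16 * b ^ 2 + 32 * b + 144 := by
    linear_combination heq
  -- bound b
  have hb4 : b ≤ 4 + |p| := by
    by_contra h
    push_neg at h
    have h5 : 5 ≤ b := by linarith
    nlinarith [mul_nonneg (by linarith : (0:ℤ) ≤ 2 * a) (by linarith : (0:ℤ) ≤ 2 * c + b - 3),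
      mul_nonneg (by linarith : (0:ℤ) ≤ b - 3) (by linarith : (0:ℤ) ≤ 2 * c),
      mul_nonneg (by linarith : (0:ℤ) ≤ b - 4 - |p|) (by linarith : (0:ℤ) ≤ b)]
  -- the two factors are nonzero
  have hA : 2 * a + b - 3 ≠ 0 := by
    intro h0
    have hpe : p = 16 * b ^ 2 - 32 * b - 144 := by
      linear_combination -h16 + 16 * (2 * c + b - 3) * h0
    have hb3 : b ≤ 3 := by linarith
    nlinarith [mul_nonneg hb (by linarith : (0:ℤ) ≤ 3 - b)]
  have hB : 2 * c + b - 3 ≠ 0 := by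
    intro h0
    have hpe : p = 16 * b ^ 2 - 32 * b - 144 := by
      linear_combination -h16 + 16 * (2 * a + b - 3) * h0
    have hb3 : b ≤ 3 := by linarith
    nlinarith [mul_nonneg hb (by linarith : (0:ℤ) ≤ 3 - b)]
  -- abs bound on N
  have hNabs : |p - 16 * b ^ 2 + 32 * b + 144| ≤ |p| + 16 * b ^ 2 + 32 * b + 144 := by
    rw [abs_le]
    constructor <;> nlinarith [sq_nonneg b, neg_abs_le p]
  have hbb : 16 * b ^ 2 + 32 * b + 144 ≤ 16 * (4 + |p|) ^ 2 + 32 * (4 + |p|) + 144 := by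
    nlinarith [mul_nonneg (by linarith : (0:ℤ) ≤ 4 + |p| - b) (by linarith : (0:ℤ) ≤ 4 + |p| + b)]
  have hA1 : 1 ≤ |2 * a + b - 3| := Int.one_le_abs hA
  have hB1 : 1 ≤ |2 * c + b - 3| := Int.one_le_abs hB
  have habsN : 16 * (|2 * a + b - 3| * |2 * c + b - 3|) = |p - 16 * b ^ 2 + 32 * b + 144| := by
    rw [← abs_mul]
    have : |(16:ℤ)| * |(2 * a + b - 3) * (2 * c + b - 3)| = |p - 16 * b ^ 2 + 32 * b + 144| := by
      rw [← abs_mul, h16]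
    simpa using this
  have haA : 2 * a + b - 3 ≤ |2 * a + b - 3| := le_abs_self _
  have hcB : 2 * c + b - 3 ≤ |2 * c + b - 3| := le_abs_self _
  have hA0 : 0 ≤ |2 * a + b - 3| := abs_nonneg _
  have hB0 : 0 ≤ |2 * c + b - 3| := abs_nonneg _
  have hAle : 16 * |2 * a + b - 3| ≤ |p - 16 * b ^ 2 + 32 * b + 144| := by
    nlinarith
  have hBle : 16 * |2 * c + b - 3| ≤ |p - 16 * b ^ 2 + 32 * b + 144| := by
    nlinarith
  refine ⟨by nlinarith, by nlinarith, by nlinarith⟩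

/-- For each integer `p > -96`, the associated function of the Calabi–Yau
fourfold #133 takes the value `p` at only finitely many points of `ℕ³`. -/
theorem stmt_16 (p : ℤ) (hp : p > -96) :
    {v : ℕ × ℕ × ℕ |
      32 * (v.1 : ℤ) * v.2.1 + 64 * v.1 * v.2.2 + 32 * (v.2.1 : ℤ) ^ 2
        + 32 * v.2.1 * v.2.2 - 96 * v.1 - 128 * v.2.1 - 96 * v.2.2
        = p}.Finite := by
  set M : ℤ := |p| + 16 * (4 + |p|) ^ 2 + 32 * (4 + |p|) + 147 with hMdef
  have hMnn : 0 ≤ M := by positivity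
  apply Set.Finite.subset (Set.finite_Icc ((0, 0, 0) : ℕ × ℕ × ℕ) (M.toNat, M.toNat, M.toNat))
  rintro ⟨a, b, c⟩ heq
  simp only [Set.mem_setOf_eq] at heq
  obtain ⟨h1, h2, h3⟩ := aux_bound_16 p a b c hp (by positivity) (by positivity) (by positivity) heq
  have hK : M ≤ (M.toNat : ℤ) := by rw [Int.toNat_of_nonneg hMnn]
  simp only [Set.mem_Icc, Prod.le_def]
  exact ⟨⟨Nat.zero_le _, Nat.zero_le _, Nat.zero_le _⟩, by exact_mod_cast h1.trans hK, by exact_mod_cast h2.trans hK, by exact_mod_cast h3.trans hK⟩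
end
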